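/- For n = 1 and n = 2 and for every m ≥ 1, there exists a finite-dimensional representation V of B (n+1) over ℂ such that the restriction of V along the inclusion ι : B n →* B (n+1) is isomorphic, as a representation of B n, to the linearization ℂ[(ℤ/mℤ)^n]. -/

import Mathlib

/-! Common setup: the signed symmetric group `B n` as a semidirect product,
its action on `Fin n → ZMod m`, and the inclusion `B n →* B (n+1)`. -/

/-- The additive automorphism of sign vectors induced by a permutation:
`ε ↦ ε ∘ σ⁻¹`. -/
def signAddAut (n : ℕ) (σ : Equiv.Perm (Fin n)) :
    (Fin n → ZMod 2) ≃+ (Fin n → ZMod 2) :=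
  { Equiv.arrowCongr σ (Equiv.refl (ZMod 2)) with
    map_add' := fun _ _ => rfl }

/-- The action of permutations on sign vectors, as a homomorphism to the
automorphism group of `Multiplicative (Fin n → ZMod 2)`. -/
def bSignHom (n : ℕ) :
    Equiv.Perm (Fin n) →* MulAut (Multiplicative (Fin n → ZMod 2)) where
  toFun σ := AddEquiv.toMultiplicative (signAddAut n σ)
  map_one' := by ext ε; rfl
  map_mul' σ τ := by ext ε; rfl

/-- The signed symmetric group on `n` letters, modelled as the semidirect
product `(Fin n → ZMod 2) ⋊ Equiv.Perm (Fin n)`, where a permutation acts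
on sign vectors by `σ • ε = ε ∘ σ⁻¹`. -/
abbrev B (n : ℕ) :=
  Multiplicative (Fin n → ZMod 2) ⋊[bSignHom n] Equiv.Perm (Fin n)

lemma neg_one_pow_val_add {M : Type*} [Monoid M] [HasDistribNeg M] (a b : ZMod 2) :
    (-1 : M) ^ (a + b).val = (-1 : M) ^ a.val * (-1 : M) ^ b.val := by
  have key : ∀ a b : ZMod 2,
      (a + b).val = a.val + b.val ∨ ((a + b).val = 0 ∧ a.val = 1 ∧ b.val = 1) := by decide
  rcases key a b with h | ⟨h1, h2, h3⟩
  · rw [h, pow_add]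
  · rw [h1, h2, h3]; simp

/-- The action of `B n` on `Fin n → ZMod m`: permute coordinates and negate
the coordinates with sign `1`, i.e. `((ε,σ) • x) i = (-1)^(ε i).val * x (σ⁻¹ i)`. -/
instance BAct (n m : ℕ) : MulAction (B n) (Fin n → ZMod m) where
  smul g x := fun i =>
    (-1 : ZMod m) ^ (Multiplicative.toAdd g.left i).val * x (g.right⁻¹ i)
  one_smul x := by
    funext i
    show (-1 : ZMod m) ^ ((0 : ZMod 2)).val * x i = x i
    simp
  mul_smul g h x := by
    funext i
    show (-1 : ZMod m) ^ ((Multiplicative.toAdd g.left i)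
        + (Multiplicative.toAdd h.left (g.right⁻¹ i))).val
        * x (h.right⁻¹ (g.right⁻¹ i))
      = (-1 : ZMod m) ^ (Multiplicative.toAdd g.left i).val
        * ((-1 : ZMod m) ^ (Multiplicative.toAdd h.left (g.right⁻¹ i)).val
          * x (h.right⁻¹ (g.right⁻¹ i)))
    rw [neg_one_pow_val_add, mul_assoc]

lemma bact_smul_def {n m : ℕ} (g : B n) (x : Fin n → ZMod m) (i : Fin n) :
    (g • x) i = (-1 : ZMod m) ^ (Multiplicative.toAdd g.left i).val * x (g.right⁻¹ i) :=
  rfl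

/-- Extension of a permutation of `Fin n` to `Fin (n+1)`, fixing the last letter. -/
def extendPermEquiv {n : ℕ} (σ : Equiv.Perm (Fin n)) : Equiv.Perm (Fin (n + 1)) where
  toFun := Fin.snoc (fun i => Fin.castSucc (σ i)) (Fin.last n)
  invFun := Fin.snoc (fun i => Fin.castSucc (σ⁻¹ i)) (Fin.last n)
  left_inv j := by
    induction j using Fin.lastCases with
    | last => simp
    | cast i => simp
  right_inv j := by
    induction j using Fin.lastCases with
    | last => simp
    | cast i => simp

@[simp] lemma extendPermEquiv_castSucc {n : ℕ} (σ : Equiv.Perm (Fin n)) (i : Fin n) :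
    extendPermEquiv σ (Fin.castSucc i) = Fin.castSucc (σ i) := by
  simp [extendPermEquiv]

@[simp] lemma extendPermEquiv_last {n : ℕ} (σ : Equiv.Perm (Fin n)) :
    extendPermEquiv σ (Fin.last n) = Fin.last n := by
  simp [extendPermEquiv]

@[simp] lemma extendPermEquiv_inv {n : ℕ} (σ : Equiv.Perm (Fin n)) :
    (extendPermEquiv σ)⁻¹ = extendPermEquiv σ⁻¹ := by
  refine Equiv.ext fun j => ?_
  rw [Equiv.Perm.inv_def, Equiv.symm_apply_eq]
  induction j using Fin.lastCases with
  | last => simp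
  | cast i => simp

@[simp] lemma extendPermEquiv_symm_castSucc {n : ℕ} (σ : Equiv.Perm (Fin n)) (i : Fin n) :
    (extendPermEquiv σ).symm (Fin.castSucc i) = Fin.castSucc (σ.symm i) := by
  rw [Equiv.symm_apply_eq]
  simp [Equiv.Perm.inv_def]

@[simp] lemma extendPermEquiv_symm_last {n : ℕ} (σ : Equiv.Perm (Fin n)) :
    (extendPermEquiv σ).symm (Fin.last n) = Fin.last n := by
  rw [Equiv.symm_apply_eq]
  simp

/-- The embedding `Equiv.Perm (Fin n) →* Equiv.Perm (Fin (n+1))` extending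
a permutation by the identity on the last letter. -/
def extendPerm (n : ℕ) : Equiv.Perm (Fin n) →* Equiv.Perm (Fin (n + 1)) where
  toFun := extendPermEquiv
  map_one' := by
    ext j
    induction j using Fin.lastCases with
    | last => simp
    | cast i => simp
  map_mul' σ τ := by
    ext j
    induction j using Fin.lastCases with
    | last => simp
    | cast i => simp

/-- The inclusion `B n →* B (n+1)`: extend the sign vector by `0` in the last
coordinate and the permutation by the identity on the last letter. -/
def ιB (n : ℕ) : B n →* B (n + 1) where
  toFun g :=
    ⟨Multiplicative.ofAdd
      (Fin.snoc (Multiplicative.toAdd g.left) 0 : Fin (n + 1) → ZMod 2), extendPerm n g.right⟩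
  map_one' := by
    refine SemidirectProduct.ext ?_ ?_
    · show Multiplicative.ofAdd
          (Fin.snoc (0 : Fin n → ZMod 2) (0 : ZMod 2) : Fin (n + 1) → ZMod 2) = 1
      have h : (Fin.snoc (0 : Fin n → ZMod 2) (0 : ZMod 2) : Fin (n + 1) → ZMod 2) = 0 := by
        funext j
        induction j using Fin.lastCases with
        | last => simp
        | cast i => simp
      rw [h]; rfl
    · show extendPerm n 1 = 1
      exact map_one _
  map_mul' g h := by
    refine SemidirectProduct.ext ?_ ?_
    · show Multiplicative.ofAdd
          (Fin.snoc (Multiplicative.toAdd ((g * h).left)) 0 : Fin (n + 1) → ZMod 2) = _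
      have key : (Fin.snoc (Multiplicative.toAdd ((g * h).left)) 0 : Fin (n + 1) → ZMod 2)
          = (Fin.snoc (Multiplicative.toAdd g.left) 0 : Fin (n + 1) → ZMod 2)
            + (Fin.snoc (Multiplicative.toAdd h.left) 0 : Fin (n + 1) → ZMod 2)
              ∘ ⇑((extendPermEquiv g.right)⁻¹) := by
        funext j
        induction j using Fin.lastCases with
        | last => simp
        | cast i =>
          show (Fin.snoc (Multiplicative.toAdd g.left
              + (Multiplicative.toAdd h.left) ∘ ⇑(g.right⁻¹)) 0
              : Fin (n + 1) → ZMod 2) i.castSucc = _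
          simp [Equiv.Perm.inv_def]
      rw [key]; rfl
    · show extendPerm n (g * h).right = _
      exact map_mul (extendPerm n) g.right h.right

/-!
For `n = 1` the total sign `B 2 → ℤ/2 = B 1` is a retraction of `ι`, so every representation of
`B 1` extends.

For `n = 2` there is no retraction, and `ℂ[(ℤ/m)²]` is extended orbit by orbit. Write `ℤ/m` as the
self-negative elements `c = -c` together with the pairs `±k`. The points `(c, d)` and `(±k, ±l)`,
whose coordinates are of the same type, form restrictions of `B 3`-sets: `B 3` swaps the two
coordinates through the sign of its permutation, and acts on the signs of `(±k, ±l)` as on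
`(ℤ/2)³` modulo the diagonal. A mixed orbit `{(±k, c), (c, ±k)}` is the set of signed letters
`±e₀, ±e₁` of `B 2`, and its permutation module is the restriction of `ℂ³ ⊕ sgn`, the signed
permutation representation of `B 3` plus the sign of the permutation: the vectors
`±e_i + e₂ + (-1)^i z` form a basis that `B 2` permutes like the letters `±e_i`. A representation
that permutes a basis is the permutation representation of that basis.
-/

open Module Multiplicative

namespace Representation

variable {k G V X : Type*} [CommRing k] [Group G] [MulAction G X] [AddCommGroup V] [Module k V]

noncomputable def equivOfMulActionOfBasis (ρ : Representation k G V) (b : Basis X k V)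
    (hb : ∀ g x, ρ g (b x) = b (g • x)) : ρ.Equiv (ofMulAction k G X) :=
  .mk (b.equiv (MonoidAlgebra.basis X k) (_root_.Equiv.refl X)) fun g =>
    b.ext fun x => by simp [hb]

end Representation

lemma ZMod.eq_zero_or_eq_one_of_two : ∀ t : ZMod 2, t = 0 ∨ t = 1 := by decide

@[simp] lemma ιB_right {n : ℕ} (g : B n) : (ιB n g).right = extendPerm n g.right := rfl

@[simp] lemma toAdd_ιB_left {n : ℕ} (g : B n) :
    toAdd (ιB n g).left = Fin.snoc (toAdd g.left) 0 := rfl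

@[simp] lemma extendPerm_apply {n : ℕ} (σ : Equiv.Perm (Fin n)) (j : Fin (n + 1)) :
    extendPerm n σ j = extendPermEquiv σ j := rfl

lemma Equiv.Perm.fin_two_eq_one_or_eq_swap :
    ∀ σ : Equiv.Perm (Fin 2), σ = 1 ∨ σ = Equiv.swap 0 1 := by
  decide

lemma sign_extendPerm_two :
    ∀ σ : Equiv.Perm (Fin 2), Equiv.Perm.sign (extendPerm 2 σ) = Equiv.Perm.sign σ := by
  decide

lemma sign_extendPerm_two_mul_neg_one_pow : ∀ (σ : Equiv.Perm (Fin 2)) (i : Fin 2),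
    (Equiv.Perm.sign (extendPerm 2 σ) : ℤ) * (-1) ^ (i : ℕ) = (-1) ^ (σ i : ℕ) := by
  decide

def totalSign (n : ℕ) : B n →* Multiplicative (ZMod 2) where
  toFun g := ofAdd (∑ i, toAdd g.left i)
  map_one' := by simp
  map_mul' g h := by
    show ofAdd (∑ i, (toAdd g.left i + toAdd h.left (g.right⁻¹ i))) = _
    rw [Finset.sum_add_distrib, Equiv.sum_comp]
    rfl

def totalSignRetraction : B 2 →* B 1 :=
  SemidirectProduct.inl.comp
    ((AddMonoidHom.toMultiplicative (Pi.constAddMonoidHom (Fin 1) (ZMod 2))).comp (totalSign 2))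

lemma totalSignRetraction_ιB (g : B 1) : totalSignRetraction (ιB 1 g) = g := by
  refine SemidirectProduct.ext (funext fun i => ?_) (Subsingleton.elim _ _)
  rw [Subsingleton.elim i 0]
  show (toAdd g.left 0 + 0 : ZMod 2) = toAdd g.left 0
  rw [add_zero]

open CategoryTheory in
lemma exists_extension_one (m : ℕ) [NeZero m] :
    ∃ V : Rep ℂ (B (1 + 1)), FiniteDimensional ℂ V.V ∧
      Nonempty (Rep.res (ιB 1) V ≅ Rep.ofMulAction ℂ (B 1) (Fin 1 → ZMod m)) :=
  ⟨Rep.res totalSignRetraction (Rep.ofMulAction ℂ (B 1) (Fin 1 → ZMod m)),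
    Module.Finite.of_basis (MonoidAlgebra.basis (Fin 1 → ZMod m) ℂ),
    ⟨Rep.mkIso (.mk (LinearEquiv.refl _ _) fun g => by simp [totalSignRetraction_ιB])⟩⟩

namespace ZMod

section NegOrbits

variable (m : ℕ)

def SelfNeg := {a : ZMod m // -a = a}

/-- One element `k` out of each pair `{k, -k}` with `k ≠ -k`. -/
def NegRep := {a : ZMod m // a.val < (-a).val}

variable {m}

def signed (k : NegRep m) (s : ZMod 2) : ZMod m := (-1) ^ s.val * k.1

@[simp] lemma signed_zero (k : NegRep m) : signed k 0 = k.1 := by simp [signed]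

@[simp] lemma signed_one (k : NegRep m) : signed k 1 = -k.1 := by
  show (-1) ^ 1 * k.1 = -k.1
  rw [pow_one, neg_one_mul]

lemma NegRep.neg_ne (k : NegRep m) : -k.1 ≠ k.1 := fun h => by
  have := k.2
  rw [h] at this
  exact lt_irrefl _ this

lemma neg_one_pow_val_mul_selfNeg (c : SelfNeg m) (t : ZMod 2) : (-1) ^ t.val * c.1 = c.1 := by
  obtain rfl | rfl := eq_zero_or_eq_one_of_two t
  · simp
  · show (-1) ^ 1 * c.1 = c.1
    rw [pow_one, neg_one_mul, c.2]

lemma neg_one_pow_val_mul_signed (k : NegRep m) (s t : ZMod 2) :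
    (-1) ^ t.val * signed k s = signed k (t + s) := by
  rw [signed, signed, ← mul_assoc, ← neg_one_pow_val_add]

variable (m) [NeZero m]

instance : Fintype (SelfNeg m) := Subtype.fintype _

instance : Fintype (NegRep m) := Subtype.fintype _

noncomputable def selfNegSumNegRepEquiv : SelfNeg m ⊕ NegRep m × ZMod 2 ≃ ZMod m where
  toFun
    | .inl c => c.1
    | .inr (k, s) => signed k s
  invFun a :=
    if h : -a = a then .inl ⟨a, h⟩
    else if h' : a.val < (-a).val then .inr (⟨a, h'⟩, 0)
    else .inr (⟨-a, by
      have : a.val ≠ (-a).val := fun hv => h (ZMod.val_injective m hv).symm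
      rw [neg_neg]
      omega⟩, 1)
  left_inv := by
    rintro (c | ⟨k, s⟩)
    · exact dif_pos c.2
    · have hk := k.2
      obtain rfl | rfl := eq_zero_or_eq_one_of_two s
      · simp only [signed_zero, k.neg_ne, ↓reduceDIte, hk]
        rfl
      · have : ¬ (-k.1).val < k.1.val := by omega
        simp only [signed_one, neg_neg, k.neg_ne.symm, ↓reduceDIte, this]
        rfl
  right_inv a := by
    by_cases h : -a = a
    · simp [h]
    · by_cases h' : a.val < (-a).val
      · simp only [h, h', dite_false, dite_true]
        exact signed_zero _
      · simp only [h, h', dite_false]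
        exact (signed_one _).trans (neg_neg a)

end NegOrbits

end ZMod

section SignedLetters

/-- `(i, s)` stands for the signed letter `(-1)^s e_i`. -/
def SignedLetter (n : ℕ) := Fin n × ZMod 2

instance (n : ℕ) : MulAction (B n) (SignedLetter n) where
  smul g a := (g.right a.1, a.2 + toAdd g.left (g.right a.1))
  one_smul a := Prod.ext rfl (add_zero a.2)
  mul_smul g h a := by
    show ((g.right * h.right) a.1, a.2 + (toAdd g.left ((g.right * h.right) a.1)
      + toAdd h.left (g.right⁻¹ ((g.right * h.right) a.1)))) =
      (g.right (h.right a.1),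
        a.2 + toAdd h.left (h.right a.1) + toAdd g.left (g.right (h.right a.1)))
    simp only [Equiv.Perm.mul_apply, Equiv.Perm.coe_inv, Equiv.symm_apply_apply]
    rw [add_assoc, add_comm (toAdd g.left _)]

lemma SignedLetter.smul_def {n : ℕ} (g : B n) (a : SignedLetter n) :
    g • a = (g.right a.1, a.2 + toAdd g.left (g.right a.1)) := rfl

instance (n : ℕ) : Fintype (SignedLetter n) := inferInstanceAs (Fintype (Fin n × ZMod 2))

instance : Nonempty (SignedLetter 2) := ⟨(0, 0)⟩

lemma SignedLetter.sum_two {M : Type*} [AddCommMonoid M] (f : SignedLetter 2 → M) :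
    ∑ a, f a = f (0, 0) + f (0, 1) + (f (1, 0) + f (1, 1)) :=
  (Fintype.sum_prod_type (γ := M) (f := f)).trans <| by
    rw [Fin.sum_univ_two]
    exact congrArg₂ (· + ·) (Fin.sum_univ_two _) (Fin.sum_univ_two _)

noncomputable def signedPermRep (n : ℕ) : Representation ℂ (B n) (Fin n → ℂ) where
  toFun g :=
    { toFun := fun v i => (-1) ^ (toAdd g.left i).val * v (g.right⁻¹ i)
      map_add' := fun v w => funext fun i => mul_add _ _ _
      map_smul' := fun c v => funext fun i => mul_left_comm _ c _ }
  map_one' := LinearMap.ext fun v => funext fun i => by simp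
  map_mul' g h := LinearMap.ext fun v => funext fun i => by
    show (-1 : ℂ) ^ (toAdd g.left i + toAdd h.left (g.right⁻¹ i)).val
      * v (h.right⁻¹ (g.right⁻¹ i)) = _
    rw [neg_one_pow_val_add, mul_assoc]
    rfl

lemma signedPermRep_single {n : ℕ} (g : B n) (j : Fin n) (c : ℂ) :
    signedPermRep n g (Pi.single j c) =
      Pi.single (g.right j) ((-1) ^ (toAdd g.left (g.right j)).val * c) := by
  funext i
  show (-1) ^ (toAdd g.left i).val * (Pi.single j c : Fin n → ℂ) (g.right⁻¹ i) = _
  by_cases h : i = g.right j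
  · subst h
    simp
  · rw [Pi.single_eq_of_ne h, Pi.single_eq_of_ne, mul_zero]
    rintro rfl
    simp at h

noncomputable def permSignRep (n : ℕ) : Representation ℂ (B n) ℂ :=
  (algebraMap ℂ (Module.End ℂ ℂ)).toMonoidHom.comp <|
    (Units.coeHom ℂ).comp <| (Units.map (Int.castRingHom ℂ).toMonoidHom).comp <|
      Equiv.Perm.sign.comp SemidirectProduct.rightHom

lemma permSignRep_apply {n : ℕ} (g : B n) (z : ℂ) :
    permSignRep n g z = (Equiv.Perm.sign g.right : ℂ) * z := by
  simp [permSignRep]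

noncomputable def signedPermSignRep : Representation ℂ (B 3) ((Fin 3 → ℂ) × ℂ) :=
  (signedPermRep 3).prod (permSignRep 3)

noncomputable def signedLetterVec (a : SignedLetter 2) : (Fin 3 → ℂ) × ℂ :=
  (Pi.single a.1.castSucc ((-1) ^ a.2.val) + Pi.single (Fin.last 2) 1, (-1) ^ (a.1 : ℕ))

lemma signedLetterVec_linearIndependent : LinearIndependent ℂ signedLetterVec := by
  rw [Fintype.linearIndependent_iff]
  intro c hc
  have h0 : c (0, 0) - c (0, 1) = 0 := by
    simpa [SignedLetter.sum_two, signedLetterVec, ZMod.val_one_eq_one_mod, sub_eq_add_neg]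
      using congrArg (fun v : (Fin 3 → ℂ) × ℂ => v.1 0) hc
  have h1 : c (1, 0) - c (1, 1) = 0 := by
    simpa [SignedLetter.sum_two, signedLetterVec, ZMod.val_one_eq_one_mod, sub_eq_add_neg]
      using congrArg (fun v : (Fin 3 → ℂ) × ℂ => v.1 1) hc
  have h2 : c (0, 0) + c (0, 1) + (c (1, 0) + c (1, 1)) = 0 := by
    simpa [SignedLetter.sum_two, signedLetterVec]
      using congrArg (fun v : (Fin 3 → ℂ) × ℂ => v.1 2) hc
  have h3 : c (0, 0) + c (0, 1) - (c (1, 0) + c (1, 1)) = 0 := by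
    simpa [SignedLetter.sum_two, signedLetterVec, sub_eq_add_neg, add_comm]
      using congrArg (fun v : (Fin 3 → ℂ) × ℂ => v.2) hc
  rintro ⟨i, s⟩
  obtain rfl | rfl := ZMod.eq_zero_or_eq_one_of_two s <;> revert i <;>
    refine Fin.forall_fin_two.2 ⟨?_, ?_⟩
  · linear_combination (2 * h0 + h2 + h3) / 4
  · linear_combination (2 * h1 + h2 - h3) / 4
  · linear_combination (-2 * h0 + h2 + h3) / 4
  · linear_combination (-2 * h1 + h2 - h3) / 4

noncomputable def signedLetterBasis : Basis (SignedLetter 2) ℂ ((Fin 3 → ℂ) × ℂ) :=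
  basisOfLinearIndependentOfCardEqFinrank signedLetterVec_linearIndependent <| by
    rw [Module.finrank_prod, Module.finrank_fin_fun, Module.finrank_self]
    rfl

lemma coe_signedLetterBasis : ⇑signedLetterBasis = signedLetterVec :=
  coe_basisOfLinearIndependentOfCardEqFinrank _ _

lemma signedPermSignRep_ιB_signedLetterVec (g : B 2) (a : SignedLetter 2) :
    signedPermSignRep (ιB 2 g) (signedLetterVec a) = signedLetterVec (g • a) := by
  have hsign : (Equiv.Perm.sign (extendPerm 2 g.right) : ℂ) * (-1) ^ (a.1 : ℕ) =
      (-1) ^ (g.right a.1 : ℕ) := by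
    exact_mod_cast sign_extendPerm_two_mul_neg_one_pow g.right a.1
  rw [SignedLetter.smul_def]
  simp only [signedPermSignRep, Representation.prod_apply_apply, signedLetterVec,
    permSignRep_apply, map_add, signedPermRep_single, ιB_right, toAdd_ιB_left, extendPerm_apply,
    extendPermEquiv_castSucc, extendPermEquiv_last, Fin.snoc_castSucc, Fin.snoc_last, hsign,
    neg_one_pow_val_add, ZMod.val_zero, pow_zero, one_mul, mul_comm]

end SignedLetters

section SignClasses

/-- `(ZMod 2)³` modulo the constant vectors, in the coordinates `(u₀ + u₂, u₁ + u₂)`. -/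
def signClass (u : Fin 3 → ZMod 2) : ZMod 2 × ZMod 2 := (u 0 + u 2, u 1 + u 2)

def signLift (p : ZMod 2 × ZMod 2) : Fin 3 → ZMod 2 := ![p.1, p.2, 0]

lemma signClass_add (u v : Fin 3 → ZMod 2) : signClass (u + v) = signClass u + signClass v :=
  Prod.ext (add_add_add_comm _ _ _ _) (add_add_add_comm _ _ _ _)

lemma signClass_signLift_comp : ∀ (σ : Equiv.Perm (Fin 3)) (u : Fin 3 → ZMod 2),
    signClass (signLift (signClass u) ∘ σ) = signClass (u ∘ σ) := by
  decide

def signClassAct (g : B 3) (p : ZMod 2 × ZMod 2) : ZMod 2 × ZMod 2 :=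
  signClass (toAdd g.left + signLift p ∘ ⇑g.right⁻¹)

lemma signClassAct_one (p : ZMod 2 × ZMod 2) : signClassAct 1 p = p := by
  simp [signClassAct, signClass, signLift]

lemma signClassAct_mul (g h : B 3) (p : ZMod 2 × ZMod 2) :
    signClassAct (g * h) p = signClassAct g (signClassAct h p) := by
  have hmul : toAdd (g * h).left + signLift p ∘ ⇑(g * h).right⁻¹ =
      toAdd g.left + (toAdd h.left + signLift p ∘ ⇑h.right⁻¹) ∘ ⇑g.right⁻¹ := by
    funext i
    show toAdd g.left i + toAdd h.left (g.right⁻¹ i) + _ = _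
    simp [mul_inv_rev, add_assoc]
  rw [signClassAct, hmul, signClassAct, signClassAct, signClass_add, signClass_add (toAdd g.left),
    signClass_signLift_comp]

def swapIf {α : Type*} (u : ℤˣ) (p : α × α) : α × α := if u = 1 then p else p.swap

lemma swapIf_mul {α : Type*} (u v : ℤˣ) (p : α × α) :
    swapIf (u * v) p = swapIf u (swapIf v p) := by
  rcases Int.units_eq_one_or u with rfl | rfl <;> rcases Int.units_eq_one_or v with rfl | rfl <;>
    simp [swapIf]

lemma signClassAct_ιB : ∀ (g : B 2) (p : ZMod 2 × ZMod 2),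
    signClassAct (ιB 2 g) p =
      (toAdd g.left 0, toAdd g.left 1) + swapIf (Equiv.Perm.sign g.right) p := by
  rintro ⟨δ, σ⟩ p
  revert δ σ p
  decide

end SignClasses

namespace ZMod

section Points

variable (m : ℕ)

abbrev SameTypePair := SelfNeg m × SelfNeg m ⊕ (NegRep m × NegRep m) × (ZMod 2 × ZMod 2)

/- Stated for `B (2 + 1)` rather than `B 3`: instance search does not identify the two, and
`ιB 2 g` lives in `B (2 + 1)`. -/
instance : MulAction (B (2 + 1)) (SameTypePair m) where
  smul g := Sum.map (swapIf (Equiv.Perm.sign g.right))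
    (Prod.map (swapIf (Equiv.Perm.sign g.right)) (signClassAct g))
  one_smul := by
    rintro (p | ⟨q, p⟩)
    · show Sum.inl (swapIf _ p) = _
      simp [swapIf]
    · show Sum.inr (swapIf _ q, _) = _
      simp [swapIf, signClassAct_one]
  mul_smul g h := by
    rintro (p | ⟨q, p⟩)
    · show Sum.inl (swapIf _ p) = Sum.inl (swapIf _ (swapIf _ p))
      rw [SemidirectProduct.mul_right, map_mul, swapIf_mul]
    · show Sum.inr (swapIf _ q, _) = Sum.inr (swapIf _ (swapIf _ q), _)
      rw [SemidirectProduct.mul_right, map_mul, swapIf_mul, signClassAct_mul]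

variable {m}

lemma SameTypePair.smul_inl (g : B (2 + 1)) (p : SelfNeg m × SelfNeg m) :
    g • (.inl p : SameTypePair m) = .inl (swapIf (Equiv.Perm.sign g.right) p) := rfl

lemma SameTypePair.smul_inr (g : B (2 + 1)) (q : NegRep m × NegRep m) (p : ZMod 2 × ZMod 2) :
    g • (.inr (q, p) : SameTypePair m) =
      .inr (swapIf (Equiv.Perm.sign g.right) q, signClassAct g p) := rfl

def sameTypePoint : SameTypePair m → Fin 2 → ZMod m
  | .inl (c, d) => ![c.1, d.1]
  | .inr ((k, l), (s, t)) => ![signed k s, signed l t]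

def mixedPoint (c : SelfNeg m) (k : NegRep m) (a : SignedLetter 2) : Fin 2 → ZMod m :=
  Function.update (fun _ => c.1) a.1 (signed k a.2)

lemma sameTypePoint_smul (g : B 2) (y : SameTypePair m) :
    sameTypePoint (ιB 2 g • y) = g • sameTypePoint y := by
  rcases Equiv.Perm.fin_two_eq_one_or_eq_swap g.right with hσ | hσ <;>
    rcases y with ⟨c, d⟩ | ⟨⟨k, l⟩, s, t⟩ <;> funext i <;> fin_cases i <;>
    simp [bact_smul_def, sameTypePoint, SameTypePair.smul_inl, SameTypePair.smul_inr, hσ,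
      signClassAct_ιB, sign_extendPerm_two, swapIf, neg_one_pow_val_mul_selfNeg,
      neg_one_pow_val_mul_signed]

lemma mixedPoint_smul (g : B 2) (c : SelfNeg m) (k : NegRep m) (a : SignedLetter 2) :
    mixedPoint c k (g • a) = g • mixedPoint c k a := by
  funext j
  rw [bact_smul_def, mixedPoint, mixedPoint, SignedLetter.smul_def]
  by_cases hj : j = g.right a.1
  · subst hj
    simp [neg_one_pow_val_mul_signed, add_comm]
  · have : g.right⁻¹ j ≠ a.1 := fun h => hj (by rw [← h]; simp)
    rw [Function.update_of_ne hj, Function.update_of_ne this, neg_one_pow_val_mul_selfNeg]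

variable (m)

abbrev PointIndex := SameTypePair m ⊕ Σ _ : SelfNeg m × NegRep m, SignedLetter 2

variable {m}

def indexPoint : PointIndex m → Fin 2 → ZMod m :=
  Sum.elim sameTypePoint fun i => mixedPoint i.1.1 i.1.2 i.2

variable [NeZero m]

lemma indexPoint_surjective : Function.Surjective (indexPoint (m := m)) := by
  intro x
  have h0 := (selfNegSumNegRepEquiv m).apply_symm_apply (x 0)
  have h1 := (selfNegSumNegRepEquiv m).apply_symm_apply (x 1)
  generalize (selfNegSumNegRepEquiv m).symm (x 0) = u at h0
  generalize (selfNegSumNegRepEquiv m).symm (x 1) = v at h1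
  rcases u with c | ⟨k, s⟩ <;> rcases v with d | ⟨l, t⟩
  · exact ⟨.inl (.inl (c, d)), funext (Fin.forall_fin_two.2 ⟨h0, h1⟩)⟩
  · exact ⟨.inr ⟨(c, l), (1, t)⟩, funext (Fin.forall_fin_two.2 ⟨h0, h1⟩)⟩
  · exact ⟨.inr ⟨(d, k), (0, s)⟩, funext (Fin.forall_fin_two.2 ⟨h0, h1⟩)⟩
  · exact ⟨.inl (.inr ((k, l), (s, t))), funext (Fin.forall_fin_two.2 ⟨h0, h1⟩)⟩

lemma card_pointIndex : Fintype.card (PointIndex m) = Fintype.card (Fin 2 → ZMod m) := by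
  have h := Fintype.card_congr (selfNegSumNegRepEquiv m)
  simp only [Fintype.card_sum, Fintype.card_prod, ZMod.card, Fintype.card_sigma,
    Finset.sum_const, Finset.card_univ, smul_eq_mul, Fintype.card_fun, Fintype.card_fin] at h ⊢
  rw [show Fintype.card (SignedLetter 2) = 4 from rfl]
  generalize Fintype.card (SelfNeg m) = a at h ⊢
  generalize Fintype.card (NegRep m) = b at h ⊢
  subst h
  ring

noncomputable def pointEquiv : PointIndex m ≃ (Fin 2 → ZMod m) :=
  .ofBijective indexPoint <|
    (Fintype.bijective_iff_surjective_and_card _).2 ⟨indexPoint_surjective, card_pointIndex⟩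

end Points

section Extension

variable (m : ℕ) [NeZero m]

abbrev ExtensionSpace :=
  MonoidAlgebra ℂ (SameTypePair m) × (SelfNeg m × NegRep m →₀ (Fin 3 → ℂ) × ℂ)

noncomputable def extensionRep : Representation ℂ (B (2 + 1)) (ExtensionSpace m) :=
  (Representation.ofMulAction ℂ (B (2 + 1)) (SameTypePair m)).prod
    (signedPermSignRep.finsupp (SelfNeg m × NegRep m))

noncomputable def extensionBasis : Basis (Fin 2 → ZMod m) ℂ (ExtensionSpace m) :=
  ((MonoidAlgebra.basis (SameTypePair m) ℂ).prod
    (Finsupp.basis fun _ => signedLetterBasis)).reindex pointEquiv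

variable {m}

lemma extensionRep_ιB_extensionBasis (g : B 2) (x : Fin 2 → ZMod m) :
    extensionRep m (ιB 2 g) (extensionBasis m x) = extensionBasis m (g • x) := by
  obtain ⟨i, rfl⟩ := pointEquiv.surjective x
  rcases i with y | ⟨⟨c, k⟩, a⟩
  · have : g • pointEquiv (.inl y) = pointEquiv (m := m) (.inl (ιB 2 g • y)) :=
      (sameTypePoint_smul g y).symm
    simp [extensionBasis, this, extensionRep]
  · have : g • pointEquiv (.inr ⟨(c, k), a⟩) = pointEquiv (m := m) (.inr ⟨(c, k), g • a⟩) :=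
      (mixedPoint_smul g c k a).symm
    simp [extensionBasis, this, extensionRep, coe_signedLetterBasis,
      signedPermSignRep_ιB_signedLetterVec]

end Extension

end ZMod

open CategoryTheory in
lemma exists_extension_two (m : ℕ) [NeZero m] :
    ∃ V : Rep ℂ (B (2 + 1)), FiniteDimensional ℂ V.V ∧
      Nonempty (Rep.res (ιB 2) V ≅ Rep.ofMulAction ℂ (B 2) (Fin 2 → ZMod m)) :=
  ⟨Rep.of (ZMod.extensionRep m), Module.Finite.of_basis (ZMod.extensionBasis m),
    ⟨Rep.mkIso (Representation.equivOfMulActionOfBasis _ (ZMod.extensionBasis m)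
      ZMod.extensionRep_ιB_extensionBasis)⟩⟩

/-- **Theorem (n ≤ 2).** For `n = 1` or `n = 2` and every `m ≥ 1`, there is a
finite-dimensional representation `V` of `B (n+1)` over `ℂ` whose restriction
along `ιB n : B n →* B (n+1)` is isomorphic, as a representation of `B n`, to
the linearization `ℂ[(ℤ/mℤ)^n]`. -/
theorem exists_extension_n_le_two (n : ℕ) (hn : n = 1 ∨ n = 2) (m : ℕ) (hm : 1 ≤ m) :
    ∃ V : Rep ℂ (B (n + 1)), FiniteDimensional ℂ V.V ∧
      Nonempty (Rep.res (ιB n) V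
        ≅ Rep.ofMulAction ℂ (B n) (Fin n → ZMod m)) := by
  have : NeZero m := ⟨by omega⟩
  rcases hn with rfl | rfl
  · exact exists_extension_one m
  · exact exists_extension_two m
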